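/- arXiv:1801.02876 — 2 statements merged into one kernel-verified Lean document; each statement's English description precedes it below -/
import Mathlib

section
/- Let Q be a probability distribution on the countably infinite alphabet X, L ≥ 1 an integer, and 0 ≤ ε ≤ 1 − ∑_{x=1}^L Q↓(x). Define the Fano-type-1 distribution P₁ from (Q, L, ε) as in the context. Then for every probability distribution R on X such that R majorizes Q and 1 − ∑_{x=1}^L R↓(x) ≤ ε, R also majorizes P₁. -/
noncomputable section
open scoped Classical

def IsPmf {α : Type*} (p : α → ℝ) : Prop := (∀ x, 0 ≤ p x) ∧ ∑' x, p x = 1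

def topSum (p : ℕ → ℝ) (k : ℕ) : ℝ :=
  sSup {t : ℝ | ∃ s : Finset ℕ, s.card = k ∧ t = ∑ x ∈ s, p x}

/-- `d` is the decreasing rearrangement of `p` (indexed from `1`):
`d` is nonincreasing on `{1,2,...}`, vanishes at the unused index `0`, and its
partial sums are the top-`k` sums of `p`. -/
def IsDecRearr (p d : ℕ → ℝ) : Prop :=
  d 0 = 0 ∧ (∀ i j, 1 ≤ i → i ≤ j → d j ≤ d i) ∧
    ∀ k, ∑ i ∈ Finset.Icc 1 k, d i = topSum p k

/-- The weight `V(j)` of the Fano-type-1 distribution. -/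
def fanoV (d : ℕ → ℝ) (L : ℕ) (ε : ℝ) (j : ℕ) : ℝ :=
  if j ≤ L then ((1 - ε) - ∑ i ∈ Finset.Icc 1 (j - 1), d i) / ((L : ℝ) - j + 1) else 1

/-- The weight `W(k)` of the Fano-type-1 distribution (for finite `k`). -/
def fanoW (d : ℕ → ℝ) (L : ℕ) (ε : ℝ) (k : ℕ) : ℝ :=
  if k = L then -1 else ((∑ i ∈ Finset.Icc 1 k, d i) - (1 - ε)) / ((k : ℝ) - L)

/-- `J := min{1 ≤ j < ∞ | Q↓(j) < V(j)}`. -/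
def fanoJ (d : ℕ → ℝ) (L : ℕ) (ε : ℝ) : ℕ :=
  sInf {j : ℕ | 1 ≤ j ∧ d j < fanoV d L ε j}

/-- `K₁ := sup{L ≤ k < ∞ | W(k) < Q↓(k)}`, an extended natural number. -/
def fanoK (d : ℕ → ℝ) (L : ℕ) (ε : ℝ) : ℕ∞ :=
  sSup {k : ℕ∞ | ∃ n : ℕ, k = (n : ℕ∞) ∧ L ≤ n ∧ fanoW d L ε n < d n}

/-- The Fano-type-1 distribution built from the decreasing rearrangement `d` of
`Q`, list size `L` and error level `ε` (with `W(∞) = 0`). -/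
def fanoType1 (d : ℕ → ℝ) (L : ℕ) (ε : ℝ) (x : ℕ) : ℝ :=
  if x < fanoJ d L ε then d x
  else if x ≤ L then fanoV d L ε (fanoJ d L ε)
  else if (x : ℕ∞) ≤ fanoK d L ε then
    (if fanoK d L ε = ⊤ then 0 else fanoW d L ε (fanoK d L ε).toNat)
  else d x

/-! The top-`k` sums `k ↦ topSum R k` of a distribution are concave in `k` (an exchange
argument), so they lie above every chord whose endpoints they dominate. The partial sums of `P₁`
coincide with those of `Q↓` outside `[J - 1, K₁]` and are affine on `[J - 1, L]` and on `[L, K₁]`,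
with endpoint values `∑_{x < J} Q↓(x)`, `1 - ε` and `∑_{x ≤ K₁} Q↓(x)`, each of which is dominated
by the corresponding top sum of `R` by hypothesis. Since `P₁` is nonnegative and nonincreasing, its
top-`k` sums are its partial sums. -/

open Finset

section TopSum

theorem IsPmf.summable {α : Type*} {p : α → ℝ} (hp : IsPmf p) : Summable p := by
  by_contra h
  simpa [tsum_eq_zero_of_not_summable h] using hp.2

theorem IsPmf.sum_le_one {α : Type*} {p : α → ℝ} (hp : IsPmf p) (s : Finset α) :
    ∑ x ∈ s, p x ≤ 1 :=
  hp.2 ▸ hp.summable.sum_le_tsum s fun x _ => hp.1 x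

variable {p : ℕ → ℝ}

theorem topSum_le {k : ℕ} {c : ℝ} (h : ∀ s : Finset ℕ, s.card = k → ∑ x ∈ s, p x ≤ c) :
    topSum p k ≤ c :=
  csSup_le ⟨_, Icc 1 k, by simp, rfl⟩ fun _ ⟨s, hs, hsum⟩ => hsum ▸ h s hs

theorem IsPmf.sum_le_topSum (hp : IsPmf p) (s : Finset ℕ) : ∑ x ∈ s, p x ≤ topSum p s.card :=
  le_csSup ⟨1, fun _ ⟨t, _, hsum⟩ => hsum ▸ hp.sum_le_one t⟩ ⟨s, rfl, rfl⟩

theorem IsPmf.topSum_le_one (hp : IsPmf p) (k : ℕ) : topSum p k ≤ 1 :=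
  topSum_le fun s _ => hp.sum_le_one s

theorem IsPmf.topSum_mono (hp : IsPmf p) : Monotone (topSum p) := by
  intro k m hkm
  refine topSum_le fun s hs => ?_
  obtain ⟨t, hst, rfl⟩ := Infinite.exists_superset_card_eq s m (hs ▸ hkm)
  exact (sum_le_sum_of_subset_of_nonneg hst fun x _ _ => hp.1 x).trans (hp.sum_le_topSum t)

/-- Moving one element of a `(k+2)`-set into a `k`-set turns both into `(k+1)`-sets. -/
theorem IsPmf.topSum_add_topSum_le (hp : IsPmf p) (k : ℕ) :
    topSum p k + topSum p (k + 2) ≤ 2 * topSum p (k + 1) := by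
  have exchange : ∀ s t : Finset ℕ, s.card = k → t.card = k + 2 →
      ∑ x ∈ s, p x + ∑ x ∈ t, p x ≤ 2 * topSum p (k + 1) := by
    intro s t hs ht
    obtain ⟨a, hat, has⟩ : ∃ a ∈ t, a ∉ s := exists_mem_notMem_of_card_lt_card (by omega)
    have hs' := hp.sum_le_topSum (insert a s)
    have ht' := hp.sum_le_topSum (t.erase a)
    rw [card_insert_of_notMem has, hs, sum_insert has] at hs'
    rw [card_erase_of_mem hat, ht, show k + 2 - 1 = k + 1 by omega] at ht'
    linarith [sum_erase_add t p hat]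
  have h : topSum p k ≤ 2 * topSum p (k + 1) - topSum p (k + 2) := by
    refine topSum_le fun s hs => ?_
    have : topSum p (k + 2) ≤ 2 * topSum p (k + 1) - ∑ x ∈ s, p x :=
      topSum_le fun t ht => by linarith [exchange s t hs ht]
    linarith
  linarith

theorem IsPmf.antitone_topSum_sub (hp : IsPmf p) :
    Antitone fun n => topSum p (n + 1) - topSum p n :=
  antitone_nat_of_succ_le fun n => by linarith [hp.topSum_add_topSum_le n]

end TopSum

section Chord

variable {f : ℕ → ℝ}

theorem nonneg_of_antitone_sub (hf : Antitone fun n => f (n + 1) - f n) {a k b : ℕ}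
    (hak : a ≤ k) (hkb : k ≤ b) (ha : 0 ≤ f a) (hb : 0 ≤ f b) : 0 ≤ f k := by
  by_contra! hk
  -- The increment at `k` bounds all earlier increments from below and all later ones from above.
  rcases le_or_gt 0 (f (k + 1) - f k) with hinc | hdec
  · have : 0 ≤ ∑ i ∈ Ico a k, (f (i + 1) - f i) :=
      sum_nonneg fun i hi => hinc.trans (hf (mem_Ico.1 hi).2.le)
    linarith [sum_Ico_sub f hak]
  · have : ∑ i ∈ Ico k b, (f (i + 1) - f i) ≤ 0 :=
      sum_nonpos fun i hi => (hf (mem_Ico.1 hi).1).trans hdec.le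
    linarith [sum_Ico_sub f hkb]

theorem add_mul_le_of_antitone_sub (hf : Antitone fun n => f (n + 1) - f n) {a k b : ℕ}
    (hak : a ≤ k) (hkb : k ≤ b) {y c : ℝ} (ha : y ≤ f a) (hb : y + ((b : ℝ) - a) * c ≤ f b) :
    y + ((k : ℝ) - a) * c ≤ f k := by
  have := nonneg_of_antitone_sub (f := fun n => f n - (y + ((n : ℝ) - a) * c))
    (fun m n hmn => by have := hf hmn; push_cast; linarith) hak hkb (by simpa using ha)
    (by linarith)
  linarith

end Chord

theorem sum_le_sum_Icc_card_of_zero_notMem {P : ℕ → ℝ} (hP : AntitoneOn P (Set.Ici 1))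
    {s : Finset ℕ} (hs : 0 ∉ s) : ∑ x ∈ s, P x ≤ ∑ i ∈ Icc 1 s.card, P i := by
  induction s using Finset.induction_on_max with
  | empty => simp
  | insert a t hlt ih =>
    have hat : a ∉ t := fun h => (hlt a h).false
    have ha : 1 ≤ a := Nat.one_le_iff_ne_zero.2 fun h => hs (h ▸ mem_insert_self a t)
    have hcard : t.card + 1 ≤ a := by
      have : t ⊆ Ico 1 a := fun x hx => mem_Ico.2
        ⟨Nat.one_le_iff_ne_zero.2 fun h => hs (mem_insert_of_mem (h ▸ hx)), hlt x hx⟩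
      have := card_le_card this
      simp only [Nat.card_Ico] at this
      omega
    rw [sum_insert hat, card_insert_of_notMem hat, sum_Icc_succ_top (by omega), add_comm]
    exact add_le_add (ih fun h => hs (mem_insert_of_mem h))
      (hP (Set.mem_Ici.2 (by omega)) (Set.mem_Ici.2 ha) hcard)

theorem sum_le_sum_Icc_card {P : ℕ → ℝ} (hP0 : P 0 = 0) (hnn : ∀ x, 0 ≤ P x)
    (hP : AntitoneOn P (Set.Ici 1)) (s : Finset ℕ) :
    ∑ x ∈ s, P x ≤ ∑ i ∈ Icc 1 s.card, P i :=
  calc ∑ x ∈ s, P x = ∑ x ∈ s.erase 0, P x := (sum_erase s hP0).symm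
    _ ≤ ∑ i ∈ Icc 1 (s.erase 0).card, P i :=
      sum_le_sum_Icc_card_of_zero_notMem hP (notMem_erase 0 s)
    _ ≤ ∑ i ∈ Icc 1 s.card, P i :=
      sum_le_sum_of_subset_of_nonneg (Icc_subset_Icc_right (card_erase_le)) fun i _ _ => hnn i

theorem topSum_le_sum_Icc {P : ℕ → ℝ} (hP0 : P 0 = 0) (hnn : ∀ x, 0 ≤ P x)
    (hP : AntitoneOn P (Set.Ici 1)) (k : ℕ) : topSum P k ≤ ∑ i ∈ Icc 1 k, P i :=
  topSum_le fun s hs => hs ▸ sum_le_sum_Icc_card hP0 hnn hP s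

theorem IsDecRearr.nonneg {p d : ℕ → ℝ} (hp : IsPmf p) (hd : IsDecRearr p d) (i : ℕ) :
    0 ≤ d i := by
  cases i with
  | zero => exact hd.1.ge
  | succ n =>
    have := hp.topSum_mono n.le_succ
    rw [← hd.2.2, ← hd.2.2, sum_Icc_succ_top (by omega)] at this
    linarith

theorem sum_Icc_one_eq_add_sum_Ioc {M : Type*} [AddCommMonoid M] (f : ℕ → M) {b c : ℕ}
    (h : b ≤ c) : ∑ i ∈ Icc 1 c, f i = ∑ i ∈ Icc 1 b, f i + ∑ i ∈ Ioc b c, f i := by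
  rw [show Icc 1 c = Ioc 0 c from Icc_add_one_left_eq_Ioc 0 c,
    show Icc 1 b = Ioc 0 b from Icc_add_one_left_eq_Ioc 0 b, sum_Ioc_consecutive f b.zero_le h]

theorem sum_Icc_one_sub_one_add {M : Type*} [AddCommMonoid M] (f : ℕ → M) {k : ℕ}
    (hk : 1 ≤ k) : ∑ i ∈ Icc 1 (k - 1), f i + f k = ∑ i ∈ Icc 1 k, f i := by
  conv_rhs => rw [← Nat.sub_add_cancel hk]
  rw [sum_Icc_succ_top (by omega), Nat.sub_add_cancel hk]

theorem sum_Ioc_eq_mul_of_eq {f : ℕ → ℝ} {a b : ℕ} {c : ℝ} (hab : a ≤ b)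
    (h : ∀ i ∈ Ioc a b, f i = c) : ∑ i ∈ Ioc a b, f i = ((b : ℝ) - a) * c := by
  rw [sum_congr rfl h, sum_const, Nat.card_Ioc, nsmul_eq_mul, Nat.cast_sub hab]

section Fano

variable {d : ℕ → ℝ} {L : ℕ} {ε : ℝ}

theorem fanoV_le_of_lt_fanoJ {j : ℕ} (hj : 1 ≤ j) (hjJ : j < fanoJ d L ε) :
    fanoV d L ε j ≤ d j :=
  not_lt.1 fun h => Nat.notMem_of_lt_sInf hjJ ⟨hj, h⟩

theorem mul_fanoV {j : ℕ} (hj : j ≤ L) :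
    ((L : ℝ) - j + 1) * fanoV d L ε j = 1 - ε - ∑ i ∈ Icc 1 (j - 1), d i := by
  have : (j : ℝ) ≤ L := by exact_mod_cast hj
  rw [fanoV, if_pos hj, mul_div_cancel₀ _ (by linarith)]

theorem mul_fanoW {k : ℕ} (hk : L < k) :
    ((k : ℝ) - L) * fanoW d L ε k = ∑ i ∈ Icc 1 k, d i - (1 - ε) := by
  have : (L : ℝ) < k := by exact_mod_cast hk
  rw [fanoW, if_neg hk.ne', mul_div_cancel₀ _ (by linarith)]

theorem exists_lt_fanoV (hL : 1 ≤ L) (hnn : ∀ i, 0 ≤ d i) (hd : AntitoneOn d (Set.Ici 1))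
    (hSL : ∑ i ∈ Icc 1 L, d i ≤ 1 - ε) (hS1 : ∑ i ∈ Icc 1 (L + 1), d i ≤ 1) :
    ∃ j ≤ L + 1, 1 ≤ j ∧ d j < fanoV d L ε j := by
  rcases hSL.lt_or_eq with hlt | heq
  · refine ⟨L, by omega, hL, ?_⟩
    have := mul_fanoV (d := d) (ε := ε) (le_refl L)
    rw [sub_self, zero_add, one_mul] at this
    linarith [sum_Icc_one_sub_one_add d hL]
  · refine ⟨L + 1, le_rfl, by omega, ?_⟩
    have h1 : d 1 ≤ ∑ i ∈ Icc 1 L, d i :=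
      single_le_sum (fun i _ => hnn i) (mem_Icc.2 ⟨le_rfl, hL⟩)
    have h2 : d (L + 1) ≤ d 1 := hd (Set.mem_Ici.2 le_rfl) (Set.mem_Ici.2 (by omega)) (by omega)
    rw [sum_Icc_succ_top (by omega)] at hS1
    rw [fanoV, if_neg (by omega)]
    linarith

theorem fanoJ_spec (hL : 1 ≤ L) (hnn : ∀ i, 0 ≤ d i) (hd : AntitoneOn d (Set.Ici 1))
    (hSL : ∑ i ∈ Icc 1 L, d i ≤ 1 - ε) (hS1 : ∑ i ∈ Icc 1 (L + 1), d i ≤ 1) :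
    1 ≤ fanoJ d L ε ∧ fanoJ d L ε ≤ L + 1 ∧ d (fanoJ d L ε) < fanoV d L ε (fanoJ d L ε) := by
  obtain ⟨j, hjL, hj⟩ := exists_lt_fanoV hL hnn hd hSL hS1
  have hJ : fanoJ d L ε ∈ {j | 1 ≤ j ∧ d j < fanoV d L ε j} := Nat.sInf_mem ⟨j, hj⟩
  exact ⟨hJ.1, (Nat.sInf_le hj).trans hjL, hJ.2⟩

theorem fanoV_succ_le {j : ℕ} (hj : 1 ≤ j) (hjL : j < L) (h : fanoV d L ε j ≤ d j) :
    fanoV d L ε (j + 1) ≤ d j := by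
  have hV := mul_fanoV (d := d) (ε := ε) hjL.le
  have hV' := mul_fanoV (d := d) (ε := ε) (j := j + 1) hjL
  rw [Nat.add_sub_cancel, ← sum_Icc_one_sub_one_add d hj] at hV'
  have hpos : (0 : ℝ) < L - j := by
    have : (j : ℝ) < L := by exact_mod_cast hjL
    linarith
  push_cast at hV'
  refine le_of_mul_le_mul_left ?_ hpos
  nlinarith [mul_le_mul_of_nonneg_left h (by linarith : (0 : ℝ) ≤ L - j + 1)]

theorem fanoV_fanoJ_le (hJ : 2 ≤ fanoJ d L ε) (hJL : fanoJ d L ε ≤ L) :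
    fanoV d L ε (fanoJ d L ε) ≤ d (fanoJ d L ε - 1) := by
  have := fanoV_succ_le (d := d) (L := L) (ε := ε) (j := fanoJ d L ε - 1) (by omega) (by omega)
    (fanoV_le_of_lt_fanoJ (by omega) (by omega))
  rwa [Nat.sub_add_cancel (by omega)] at this

/-- At `J = L + 1` this says `∑_{x ≤ L} Q↓(x) = 1 - ε`, which follows from the minimality of `J`. -/
theorem sum_add_mul_fanoV_fanoJ (hL : 1 ≤ L) (hSL : ∑ i ∈ Icc 1 L, d i ≤ 1 - ε)
    (hJL : fanoJ d L ε ≤ L + 1) :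
    ∑ i ∈ Icc 1 (fanoJ d L ε - 1), d i + ((L : ℝ) + 1 - fanoJ d L ε) * fanoV d L ε (fanoJ d L ε)
      = 1 - ε := by
  rcases hJL.lt_or_eq with hlt | heq
  · linarith [mul_fanoV (d := d) (ε := ε) (Nat.lt_succ_iff.1 hlt)]
  · have hV := mul_fanoV (d := d) (ε := ε) (le_refl L)
    have hVd := fanoV_le_of_lt_fanoJ (d := d) (L := L) (ε := ε) hL (by omega)
    rw [sub_self, zero_add, one_mul] at hV
    rw [heq, Nat.add_sub_cancel]
    push_cast
    linarith [sum_Icc_one_sub_one_add d hL]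

theorem sub_mul_le_of_le_fanoW {k : ℕ} (hk : L ≤ k) (h : d (k + 1) ≤ fanoW d L ε (k + 1)) :
    ((k : ℝ) - L) * d (k + 1) ≤ ∑ i ∈ Icc 1 k, d i - (1 - ε) := by
  have hW := mul_fanoW (d := d) (L := L) (ε := ε) (k := k + 1) (by omega)
  have : (L : ℝ) ≤ k := by exact_mod_cast hk
  rw [sum_Icc_succ_top (by omega)] at hW
  push_cast at hW
  nlinarith [mul_le_mul_of_nonneg_left h (by linarith : (0 : ℝ) ≤ k + 1 - L)]

theorem sum_eq_add_mul_fanoW {k : ℕ} (hk : L ≤ k) (hSL : ∑ i ∈ Icc 1 L, d i ≤ 1 - ε)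
    (h : d (k + 1) ≤ fanoW d L ε (k + 1)) :
    ∑ i ∈ Icc 1 k, d i = 1 - ε + ((k : ℝ) - L) * fanoW d L ε k := by
  rcases hk.lt_or_eq with hlt | rfl
  · linarith [mul_fanoW (d := d) (ε := ε) hlt]
  · have := sub_mul_le_of_le_fanoW le_rfl h
    rw [sub_self, zero_mul] at this ⊢
    linarith

theorem le_fanoW_of_succ {k : ℕ} (hk : L < k) (h : d (k + 1) ≤ fanoW d L ε (k + 1)) :
    d (k + 1) ≤ fanoW d L ε k := by
  have : (L : ℝ) < k := by exact_mod_cast hk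
  refine le_of_mul_le_mul_left ?_ (by linarith : (0 : ℝ) < k - L)
  linarith [sub_mul_le_of_le_fanoW hk.le h, mul_fanoW (d := d) (ε := ε) hk]

theorem fanoK_eq_top_or (hL : 0 ≤ d L) :
    fanoK d L ε = ⊤ ∨ ∃ k : ℕ, fanoK d L ε = k ∧ L ≤ k ∧ fanoW d L ε k < d k ∧
      ∀ n, k < n → d n ≤ fanoW d L ε n := by
  set N := {n : ℕ | L ≤ n ∧ fanoW d L ε n < d n}
  have hLN : L ∈ N := ⟨le_rfl, by rw [fanoW, if_pos rfl]; linarith⟩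
  have hle : ∀ n ∈ N, (n : ℕ∞) ≤ fanoK d L ε := fun n hn => le_sSup ⟨n, rfl, hn⟩
  by_cases hN : BddAbove N
  · obtain ⟨hLk, hWk⟩ : sSup N ∈ N := Nat.sSup_mem ⟨L, hLN⟩ hN
    refine .inr ⟨sSup N, le_antisymm ?_ (hle _ ⟨hLk, hWk⟩), hLk, hWk, fun n hn => ?_⟩
    · exact sSup_le fun _ ⟨n, hn, hnN⟩ => hn ▸ Nat.cast_le.2 (le_csSup hN hnN)
    · by_contra! h
      exact (le_csSup hN ⟨hLk.trans hn.le, h⟩).not_gt hn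
  · refine .inl (ENat.eq_top_iff_forall_ge.2 fun m => ?_)
    obtain ⟨n, hn, hmn⟩ := not_bddAbove_iff.1 hN m
    exact (Nat.cast_le.2 hmn.le).trans (hle n hn)

variable {x : ℕ}

theorem fanoType1_of_lt (hx : x < fanoJ d L ε) : fanoType1 d L ε x = d x :=
  if_pos hx

theorem fanoType1_of_le_of_le (hJx : fanoJ d L ε ≤ x) (hxL : x ≤ L) :
    fanoType1 d L ε x = fanoV d L ε (fanoJ d L ε) := by
  rw [fanoType1, if_neg hJx.not_gt, if_pos hxL]

theorem fanoType1_of_fanoK_eq_top (hJ : fanoJ d L ε ≤ L + 1) (hK : fanoK d L ε = ⊤)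
    (hx : L < x) : fanoType1 d L ε x = 0 := by
  rw [fanoType1, if_neg (by omega), if_neg hx.not_ge, if_pos (hK ▸ le_top), if_pos hK]

theorem fanoType1_of_le_fanoK {k : ℕ} (hJ : fanoJ d L ε ≤ L + 1) (hK : fanoK d L ε = k)
    (hx : L < x) (hxk : x ≤ k) : fanoType1 d L ε x = fanoW d L ε k := by
  rw [fanoType1, if_neg (by omega), if_neg hx.not_ge, hK, if_pos (by exact_mod_cast hxk),
    if_neg (ENat.natCast_ne_top k), ENat.toNat_natCast]

theorem fanoType1_of_fanoK_lt {k : ℕ} (hK : fanoK d L ε = k) (hLk : L ≤ k) (hkx : k < x) :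
    fanoType1 d L ε x = d x := by
  by_cases hxJ : x < fanoJ d L ε
  · exact if_pos hxJ
  rw [fanoType1, if_neg hxJ, if_neg (by omega), hK, if_neg (by exact_mod_cast hkx.not_ge)]

theorem le_fanoType1 (hd : AntitoneOn d (Set.Ici 1)) (hJ1 : 1 ≤ fanoJ d L ε)
    (hJd : d (fanoJ d L ε) < fanoV d L ε (fanoJ d L ε)) (hx : 1 ≤ x) (hxL : x ≤ L) :
    d x ≤ fanoType1 d L ε x := by
  rcases lt_or_ge x (fanoJ d L ε) with hxJ | hJx
  · exact (fanoType1_of_lt hxJ).ge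
  · rw [fanoType1_of_le_of_le hJx hxL]
    exact (hd (Set.mem_Ici.2 hJ1) (Set.mem_Ici.2 hx) hJx).trans hJd.le

theorem fanoType1_le (hnn : ∀ i, 0 ≤ d i) (hd : AntitoneOn d (Set.Ici 1))
    (hJ : fanoJ d L ε ≤ L + 1) (hx : L < x) : fanoType1 d L ε x ≤ d x := by
  rcases fanoK_eq_top_or (hnn L) with hK | ⟨k, hK, hLk, hWk, -⟩
  · rw [fanoType1_of_fanoK_eq_top hJ hK hx]
    exact hnn x
  rcases le_or_gt x k with hxk | hkx
  · rw [fanoType1_of_le_fanoK hJ hK hx hxk]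
    exact hWk.le.trans (hd (Set.mem_Ici.2 (by omega)) (Set.mem_Ici.2 (by omega)) hxk)
  · exact (fanoType1_of_fanoK_lt hK hLk hkx).le

theorem fanoType1_nonneg (hnn : ∀ i, 0 ≤ d i) (hJ : fanoJ d L ε ≤ L + 1)
    (hJd : d (fanoJ d L ε) < fanoV d L ε (fanoJ d L ε)) (x : ℕ) : 0 ≤ fanoType1 d L ε x := by
  rcases le_or_gt x L with hxL | hLx
  · rcases lt_or_ge x (fanoJ d L ε) with hxJ | hJx
    · rw [fanoType1_of_lt hxJ]
      exact hnn x
    · rw [fanoType1_of_le_of_le hJx hxL]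
      exact (hnn _).trans hJd.le
  rcases fanoK_eq_top_or (hnn L) with hK | ⟨k, hK, hLk, -, hdW⟩
  · rw [fanoType1_of_fanoK_eq_top hJ hK hLx]
  rcases le_or_gt x k with hxk | hkx
  · rw [fanoType1_of_le_fanoK hJ hK hLx hxk]
    exact (hnn _).trans (le_fanoW_of_succ (by omega) (hdW _ k.lt_succ_self))
  · rw [fanoType1_of_fanoK_lt hK hLk hkx]
    exact hnn x

theorem fanoType1_antitoneOn_Icc (hd : AntitoneOn d (Set.Ici 1)) :
    AntitoneOn (fanoType1 d L ε) (Set.Icc 1 L) := by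
  rintro i ⟨hi1, hiL⟩ j ⟨hj1, hjL⟩ hij
  rcases lt_or_ge j (fanoJ d L ε) with hjJ | hJj
  · rw [fanoType1_of_lt hjJ, fanoType1_of_lt (hij.trans_lt hjJ)]
    exact hd (Set.mem_Ici.2 hi1) (Set.mem_Ici.2 hj1) hij
  rw [fanoType1_of_le_of_le hJj hjL]
  rcases lt_or_ge i (fanoJ d L ε) with hiJ | hJi
  · rw [fanoType1_of_lt hiJ]
    exact (fanoV_fanoJ_le (by omega) (by omega)).trans
      (hd (Set.mem_Ici.2 hi1) (Set.mem_Ici.2 (by omega)) (by omega))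
  · rw [fanoType1_of_le_of_le hJi hiL]

theorem fanoType1_antitoneOn_Ioi (hnn : ∀ i, 0 ≤ d i) (hd : AntitoneOn d (Set.Ici 1))
    (hJ : fanoJ d L ε ≤ L + 1) : AntitoneOn (fanoType1 d L ε) (Set.Ioi L) := by
  rintro i (hi : L < i) j (hj : L < j) hij
  rcases fanoK_eq_top_or (hnn L) with hK | ⟨k, hK, hLk, -, hdW⟩
  · rw [fanoType1_of_fanoK_eq_top hJ hK hi, fanoType1_of_fanoK_eq_top hJ hK hj]
  rcases le_or_gt j k with hjk | hkj
  · rw [fanoType1_of_le_fanoK hJ hK hi (hij.trans hjk), fanoType1_of_le_fanoK hJ hK hj hjk]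
  rw [fanoType1_of_fanoK_lt hK hLk hkj]
  rcases le_or_gt i k with hik | hki
  · rw [fanoType1_of_le_fanoK hJ hK hi hik]
    exact (hd (Set.mem_Ici.2 (by omega)) (Set.mem_Ici.2 (by omega)) hkj).trans
      (le_fanoW_of_succ (by omega) (hdW _ k.lt_succ_self))
  · rw [fanoType1_of_fanoK_lt hK hLk hki]
    exact hd (Set.mem_Ici.2 (by omega)) (Set.mem_Ici.2 (by omega)) hij

theorem fanoType1_antitoneOn (hnn : ∀ i, 0 ≤ d i) (hd : AntitoneOn d (Set.Ici 1))
    (hJ1 : 1 ≤ fanoJ d L ε) (hJ : fanoJ d L ε ≤ L + 1)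
    (hJd : d (fanoJ d L ε) < fanoV d L ε (fanoJ d L ε)) :
    AntitoneOn (fanoType1 d L ε) (Set.Ici 1) := by
  rintro i (hi : 1 ≤ i) j (hj : 1 ≤ j) hij
  rcases le_or_gt j L with hjL | hLj
  · exact fanoType1_antitoneOn_Icc hd ⟨hi, hij.trans hjL⟩ ⟨hj, hjL⟩ hij
  rcases le_or_gt i L with hiL | hLi
  · calc fanoType1 d L ε j ≤ d j := fanoType1_le hnn hd hJ hLj
      _ ≤ d i := hd hi hj hij
      _ ≤ fanoType1 d L ε i := le_fanoType1 hd hJ1 hJd hi hiL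
  · exact fanoType1_antitoneOn_Ioi hnn hd hJ hLi hLj hij

variable {m : ℕ}

theorem sum_fanoType1_of_lt (hm : m < fanoJ d L ε) :
    ∑ i ∈ Icc 1 m, fanoType1 d L ε i = ∑ i ∈ Icc 1 m, d i :=
  sum_congr rfl fun _ hi => fanoType1_of_lt ((mem_Icc.1 hi).2.trans_lt hm)

theorem sum_fanoType1_of_le (hJ1 : 1 ≤ fanoJ d L ε) (hJm : fanoJ d L ε - 1 ≤ m) (hmL : m ≤ L) :
    ∑ i ∈ Icc 1 m, fanoType1 d L ε i = ∑ i ∈ Icc 1 (fanoJ d L ε - 1), d i +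
      ((m : ℝ) - (fanoJ d L ε - 1 : ℕ)) * fanoV d L ε (fanoJ d L ε) := by
  rw [sum_Icc_one_eq_add_sum_Ioc _ hJm, sum_fanoType1_of_lt (by omega),
    sum_Ioc_eq_mul_of_eq hJm fun i hi =>
      fanoType1_of_le_of_le (by have := (mem_Ioc.1 hi).1; omega) ((mem_Ioc.1 hi).2.trans hmL)]

theorem sum_fanoType1_L (hL : 1 ≤ L) (hSL : ∑ i ∈ Icc 1 L, d i ≤ 1 - ε)
    (hJ1 : 1 ≤ fanoJ d L ε) (hJL : fanoJ d L ε ≤ L + 1) :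
    ∑ i ∈ Icc 1 L, fanoType1 d L ε i = 1 - ε := by
  rw [sum_fanoType1_of_le hJ1 (by omega) le_rfl, Nat.cast_sub hJ1,
    ← sum_add_mul_fanoV_fanoJ hL hSL hJL]
  push_cast
  ring

theorem sum_fanoType1_of_le_fanoK {k : ℕ} (hJ : fanoJ d L ε ≤ L + 1) (hK : fanoK d L ε = k)
    (hLm : L ≤ m) (hmk : m ≤ k) :
    ∑ i ∈ Icc 1 m, fanoType1 d L ε i =
      ∑ i ∈ Icc 1 L, fanoType1 d L ε i + ((m : ℝ) - L) * fanoW d L ε k := by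
  rw [sum_Icc_one_eq_add_sum_Ioc _ hLm, sum_Ioc_eq_mul_of_eq hLm fun i hi =>
    fanoType1_of_le_fanoK hJ hK (mem_Ioc.1 hi).1 ((mem_Ioc.1 hi).2.trans hmk)]

theorem sum_fanoType1_of_fanoK_le {k : ℕ} (hK : fanoK d L ε = k) (hLk : L ≤ k) (hkm : k ≤ m) :
    ∑ i ∈ Icc 1 m, fanoType1 d L ε i = ∑ i ∈ Icc 1 k, fanoType1 d L ε i + ∑ i ∈ Ioc k m, d i := by
  rw [sum_Icc_one_eq_add_sum_Ioc _ hkm,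
    sum_congr rfl fun i hi => fanoType1_of_fanoK_lt hK hLk (mem_Ioc.1 hi).1]

theorem sum_fanoType1_of_fanoK_eq_top (hJ : fanoJ d L ε ≤ L + 1) (hK : fanoK d L ε = ⊤)
    (hLm : L ≤ m) : ∑ i ∈ Icc 1 m, fanoType1 d L ε i = ∑ i ∈ Icc 1 L, fanoType1 d L ε i := by
  rw [sum_Icc_one_eq_add_sum_Ioc _ hLm,
    sum_eq_zero fun i hi => fanoType1_of_fanoK_eq_top hJ hK (mem_Ioc.1 hi).1, add_zero]

theorem sum_fanoType1_le {F : ℕ → ℝ} (hF : Antitone fun n => F (n + 1) - F n) (hFm : Monotone F)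
    (hSF : ∀ k, ∑ i ∈ Icc 1 k, d i ≤ F k) (hFL : 1 - ε ≤ F L) (hL : 1 ≤ L)
    (hnn : ∀ i, 0 ≤ d i) (hSL : ∑ i ∈ Icc 1 L, d i ≤ 1 - ε) (hJ1 : 1 ≤ fanoJ d L ε)
    (hJL : fanoJ d L ε ≤ L + 1) (k : ℕ) : ∑ i ∈ Icc 1 k, fanoType1 d L ε i ≤ F k := by
  have hPL := sum_fanoType1_L hL hSL hJ1 hJL
  rcases lt_or_ge k (fanoJ d L ε) with hkJ | hJk
  · rw [sum_fanoType1_of_lt hkJ]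
    exact hSF k
  rcases le_or_gt k L with hkL | hLk
  · rw [sum_fanoType1_of_le hJ1 (by omega) hkL]
    refine add_mul_le_of_antitone_sub hF (by omega) hkL (hSF _) ?_
    rwa [← sum_fanoType1_of_le hJ1 (by omega) le_rfl, hPL]
  rcases fanoK_eq_top_or (hnn L) with hK | ⟨k₁, hK, hLk₁, -, hdW⟩
  · rw [sum_fanoType1_of_fanoK_eq_top hJL hK hLk.le, hPL]
    exact hFL.trans (hFm hLk.le)
  have hSk₁ := sum_eq_add_mul_fanoW hLk₁ hSL (hdW _ k₁.lt_succ_self)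
  rcases le_or_gt k k₁ with hkk | hkk
  · rw [sum_fanoType1_of_le_fanoK hJL hK hLk.le hkk, hPL]
    exact add_mul_le_of_antitone_sub hF hLk.le hkk hFL (hSk₁ ▸ hSF k₁)
  · rw [sum_fanoType1_of_fanoK_le hK hLk₁ hkk.le, sum_fanoType1_of_le_fanoK hJL hK hLk₁ le_rfl,
      hPL, ← hSk₁, ← sum_Icc_one_eq_add_sum_Ioc _ hkk.le]
    exact hSF k

end Fano

theorem stmt_6_general (Q d : ℕ → ℝ) (L : ℕ) (ε : ℝ)
    (hQ : IsPmf Q) (hd : IsDecRearr Q d) (hL : 1 ≤ L)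
    (hε1 : ε ≤ 1 - topSum Q L)
    (R : ℕ → ℝ) (hR : IsPmf R)
    (hmaj : ∀ k, topSum Q k ≤ topSum R k)
    (hPe : 1 - topSum R L ≤ ε) :
    ∀ k, topSum (fanoType1 d L ε) k ≤ topSum R k := by
  have hnn := hd.nonneg hQ
  obtain ⟨hd0, hanti, hS⟩ := hd
  have hanti' : AntitoneOn d (Set.Ici 1) := fun i hi j _ hij => hanti i j hi hij
  have hSL : ∑ i ∈ Icc 1 L, d i ≤ 1 - ε := by
    rw [hS]
    linarith
  have hS1 : ∑ i ∈ Icc 1 (L + 1), d i ≤ 1 := (hS _).trans_le (hQ.topSum_le_one _)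
  obtain ⟨hJ1, hJL, hJd⟩ := fanoJ_spec hL hnn hanti' hSL hS1
  intro k
  calc topSum (fanoType1 d L ε) k ≤ ∑ i ∈ Icc 1 k, fanoType1 d L ε i :=
        topSum_le_sum_Icc ((fanoType1_of_lt hJ1).trans hd0) (fanoType1_nonneg hnn hJL hJd)
          (fanoType1_antitoneOn hnn hanti' hJ1 hJL hJd) k
    _ ≤ topSum R k :=
        sum_fanoType1_le hR.antitone_topSum_sub hR.topSum_mono (fun k => (hS k).trans_le (hmaj k))
          (by linarith) hL hnn hSL hJ1 hJL k

/-- Any distribution `R` that majorizes `Q` and has list decoding error (without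
side information) at most `ε` also majorizes the Fano-type-1 distribution. -/
theorem stmt_6 (Q d : ℕ → ℝ) (L : ℕ) (ε : ℝ)
    (hQ : IsPmf Q) (hd : IsDecRearr Q d) (hL : 1 ≤ L)
    (hε0 : 0 ≤ ε) (hε1 : ε ≤ 1 - topSum Q L)
    (R : ℕ → ℝ) (hR : IsPmf R)
    (hmaj : ∀ k, topSum Q k ≤ topSum R k)
    (hPe : 1 - topSum R L ≤ ε) :
    ∀ k, topSum (fanoType1 d L ε) k ≤ topSum R k :=
  stmt_6_general Q d L ε hQ hd hL hε1 R hR hmaj hPe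
end
end

section
/- Let α > 1 and let (X_n, Y_n) be a sequence of pairs of random variables with X_n on a countably infinite alphabet, with list sizes L_n ≥ 1. If the minimum list decoding error probabilities satisfy P_e^{(L_n)}(X_n|Y_n) → 0 as n → ∞, then max{0, H_α^A(X_n|Y_n) − log L_n} → 0, where H_α^A is Arimoto's conditional Rényi entropy of order α. -/
/-!
For a set `s` of `L` symbols, the power-mean inequality gives
`∑_{x ∈ s} p x ≤ L ^ (1 - 1/α) ‖p‖_α`, hence the probability `1 - P_e` of correct list decoding
is at most `L ^ (1 - 1/α) · E[‖P_{X|Y}‖_α]`. Taking logarithms,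
`H_α^A(X|Y) - log L ≤ (α / (1 - α)) log (1 - P_e)`, and the right-hand side tends to `0`
when `P_e → 0`.
-/

noncomputable section
open Filter Topology

/-- Arimoto's conditional Rényi entropy of order `α`. -/
def arimoto (α : ℝ) {β : Type*} (q : β → ℝ) (W : β → ℕ → ℝ) : ℝ :=
  (α / (1 - α)) * Real.log (∑' y, q y * (∑' x, W y x ^ α) ^ (1 / α))

def lpNorm (α : ℝ) {γ : Type*} (p : γ → ℝ) : ℝ := (∑' x, p x ^ α) ^ (1 / α)

theorem arimoto_eq_log_tsum_lpNorm (α : ℝ) {β : Type*} (q : β → ℝ) (W : β → ℕ → ℝ) :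
    arimoto α q W = α / (1 - α) * Real.log (∑' y, q y * lpNorm α (W y)) :=
  rfl

namespace IsPmf

variable {γ : Type*} {p : γ → ℝ}

theorem summable_s12 (hp : IsPmf p) : Summable p := by
  by_contra h
  have := hp.2
  rw [tsum_eq_zero_of_not_summable h] at this
  exact zero_ne_one this

theorem le_one (hp : IsPmf p) (x : γ) : p x ≤ 1 :=
  hp.2 ▸ hp.summable_s12.le_tsum x fun y _ => hp.1 y

theorem sum_le_one_s12 (hp : IsPmf p) (s : Finset γ) : ∑ x ∈ s, p x ≤ 1 :=
  hp.2 ▸ hp.summable_s12.sum_le_tsum s fun x _ => hp.1 x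

theorem rpow_le_self (hp : IsPmf p) {α : ℝ} (hα : 1 ≤ α) (x : γ) : p x ^ α ≤ p x :=
  Real.rpow_le_self_of_le_one (hp.1 x) (hp.le_one x) hα

theorem summable_rpow (hp : IsPmf p) {α : ℝ} (hα : 1 ≤ α) : Summable fun x => p x ^ α :=
  .of_nonneg_of_le (fun x => Real.rpow_nonneg (hp.1 x) α) (hp.rpow_le_self hα) hp.summable_s12

theorem lpNorm_le_one (hp : IsPmf p) {α : ℝ} (hα : 1 ≤ α) : lpNorm α p ≤ 1 := by
  refine Real.rpow_le_one (tsum_nonneg fun x => Real.rpow_nonneg (hp.1 x) α) ?_ (by positivity)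
  exact hp.2 ▸ (hp.summable_rpow hα).tsum_le_tsum (hp.rpow_le_self hα) hp.summable_s12

end IsPmf

theorem lpNorm_nonneg {γ : Type*} {p : γ → ℝ} (hp : ∀ x, 0 ≤ p x) (α : ℝ) : 0 ≤ lpNorm α p :=
  Real.rpow_nonneg (tsum_nonneg fun x => Real.rpow_nonneg (hp x) α) _

theorem topSum_nonneg {p : ℕ → ℝ} (hp : IsPmf p) (k : ℕ) : 0 ≤ topSum p k := by
  have hbdd : BddAbove {t : ℝ | ∃ s : Finset ℕ, s.card = k ∧ t = ∑ x ∈ s, p x} :=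
    ⟨1, by rintro t ⟨s, -, rfl⟩; exact hp.sum_le_one_s12 s⟩
  exact (Finset.sum_nonneg fun x _ => hp.1 x).trans
    (le_csSup hbdd ⟨Finset.range k, Finset.card_range k, rfl⟩)

theorem topSum_le_rpow_mul_lpNorm {p : ℕ → ℝ} (hp : IsPmf p) {α : ℝ} (hα : 1 ≤ α) (L : ℕ) :
    topSum p L ≤ (L : ℝ) ^ (1 - 1 / α) * lpNorm α p := by
  have hα₀ : 0 < α := by linarith
  refine Real.sSup_le ?_ (mul_nonneg (by positivity) (lpNorm_nonneg hp.1 α))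
  rintro t ⟨s, hs, rfl⟩
  have hsum : ∑ x ∈ s, p x ^ α ≤ ∑' x, p x ^ α :=
    (hp.summable_rpow hα).sum_le_tsum s fun x _ => Real.rpow_nonneg (hp.1 x) α
  calc ∑ x ∈ s, p x = ((∑ x ∈ s, p x) ^ α) ^ (1 / α) := by
        rw [one_div, Real.rpow_rpow_inv (Finset.sum_nonneg fun x _ => hp.1 x) hα₀.ne']
    _ ≤ ((L : ℝ) ^ (α - 1) * ∑' x, p x ^ α) ^ (1 / α) := by
        refine Real.rpow_le_rpow (Real.rpow_nonneg (Finset.sum_nonneg fun x _ => hp.1 x) α) ?_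
          (by positivity)
        calc (∑ x ∈ s, p x) ^ α ≤ (s.card : ℝ) ^ (α - 1) * ∑ x ∈ s, p x ^ α :=
              Real.rpow_sum_le_const_mul_sum_rpow_of_nonneg s hα fun x _ => hp.1 x
          _ ≤ (L : ℝ) ^ (α - 1) * ∑' x, p x ^ α := by rw [hs]; gcongr
    _ = (L : ℝ) ^ (1 - 1 / α) * lpNorm α p := by
        rw [Real.mul_rpow (by positivity) (tsum_nonneg fun x => Real.rpow_nonneg (hp.1 x) α),
          ← Real.rpow_mul (Nat.cast_nonneg L), lpNorm]
        congr 2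
        field_simp

theorem tsum_mul_topSum_le {β : Type*} {q : β → ℝ} {W : β → ℕ → ℝ} (hq : IsPmf q)
    (hW : ∀ y, IsPmf (W y)) {α : ℝ} (hα : 1 ≤ α) (L : ℕ) :
    ∑' y, q y * topSum (W y) L ≤ (L : ℝ) ^ (1 - 1 / α) * ∑' y, q y * lpNorm α (W y) := by
  have hpt : ∀ y, q y * topSum (W y) L ≤ (L : ℝ) ^ (1 - 1 / α) * (q y * lpNorm α (W y)) :=
    fun y => by
      rw [mul_left_comm]
      exact mul_le_mul_of_nonneg_left (topSum_le_rpow_mul_lpNorm (hW y) hα L) (hq.1 y)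
  have hnorm : Summable fun y => q y * lpNorm α (W y) :=
    .of_nonneg_of_le (fun y => mul_nonneg (hq.1 y) (lpNorm_nonneg (hW y).1 α))
      (fun y => mul_le_of_le_one_right (hq.1 y) ((hW y).lpNorm_le_one hα)) hq.summable_s12
  rw [← tsum_mul_left]
  exact (Summable.of_nonneg_of_le (fun y => mul_nonneg (hq.1 y) (topSum_nonneg (hW y) L)) hpt
    (hnorm.mul_left _)).tsum_le_tsum hpt (hnorm.mul_left _)

theorem arimoto_sub_log_le {β : Type*} {q : β → ℝ} {W : β → ℕ → ℝ} (hq : IsPmf q)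
    (hW : ∀ y, IsPmf (W y)) {α : ℝ} (hα : 1 < α) {L : ℕ} (hL : 0 < L)
    (hS : 0 < ∑' y, q y * topSum (W y) L) :
    arimoto α q W - Real.log L ≤ α / (1 - α) * Real.log (∑' y, q y * topSum (W y) L) := by
  rw [arimoto_eq_log_tsum_lpNorm]
  set S := ∑' y, q y * topSum (W y) L
  set E := ∑' y, q y * lpNorm α (W y)
  have hLpos : (0 : ℝ) < L := by exact_mod_cast hL
  have hSE : S ≤ (L : ℝ) ^ (1 - 1 / α) * E := tsum_mul_topSum_le hq hW hα.le L
  have hE : 0 < E := pos_of_mul_pos_right (hS.trans_le hSE) (by positivity)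
  have hlog : Real.log S ≤ (1 - 1 / α) * Real.log L + Real.log E := by
    rw [← Real.log_rpow hLpos, ← Real.log_mul (by positivity) hE.ne']
    exact Real.log_le_log hS hSE
  have hcoef : α / (1 - α) * (1 - 1 / α) = -1 := by
    field_simp [show 1 - α ≠ 0 by linarith]
    ring
  have := mul_le_mul_of_nonpos_left hlog (div_nonpos_of_nonneg_of_nonpos (by linarith)
    (by linarith) : α / (1 - α) ≤ 0)
  rw [mul_add, ← mul_assoc, hcoef] at this
  linarith

/-- For any order `α > 1`, vanishing list decoding error probability implies
vanishing Rényi equivocation: `P_e^{(L_n)}(X_n|Y_n) → 0` implies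
`max{0, H_α^A(X_n|Y_n) − log L_n} → 0`. -/
theorem stmt_12 (α : ℝ) (hα : 1 < α) (L : ℕ → ℕ) (hL : ∀ n, 1 ≤ L n)
    (β : ℕ → Type) (q : ∀ n, β n → ℝ) (W : ∀ n, β n → ℕ → ℝ)
    (hq : ∀ n, IsPmf (q n)) (hW : ∀ n y, IsPmf (W n y))
    (hPe : Tendsto (fun n => 1 - ∑' y, q n y * topSum (W n y) (L n)) atTop (𝓝 0)) :
    Tendsto (fun n => max 0 (arimoto α (q n) (W n) - Real.log (L n))) atTop (𝓝 0) := by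
  set S : ℕ → ℝ := fun n => ∑' y, q n y * topSum (W n y) (L n)
  have hS : Tendsto S atTop (𝓝 1) := by simpa using hPe.const_sub 1
  have hbound : Tendsto (fun n => max 0 (α / (1 - α) * Real.log (S n))) atTop (𝓝 0) := by
    simpa using (tendsto_const_nhds (x := (0 : ℝ))).max
      ((hS.log one_ne_zero).const_mul (α / (1 - α)))
  refine tendsto_of_tendsto_of_tendsto_of_le_of_le' tendsto_const_nhds hbound
    (.of_forall fun n => le_max_left _ _) ?_
  filter_upwards [hS.eventually (lt_mem_nhds one_pos)] with n hn
  exact max_le_max le_rfl (arimoto_sub_log_le (hq n) (hW n) hα (hL n) hn)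
end
end
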